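/- If V(Σ) is n-permutable (there exist Hagemann–Mitschke terms p₁,...,p_{n-1}) and the free-algebra functor F_Σ weakly preserves kernel pairs, then V(Σ) is a Mal'cev variety: there exists a ternary term m with Σ ⊢ m(x,y,y) ≈ x and Σ ⊢ m(x,x,y) ≈ y. -/
import Mathlib


universe u

/-- A finitary algebraic signature. -/
structure Sig where
  ops : Type
  ar : ops → ℕ

namespace UA

/-- Terms over the signature `S` with variables from `X`. -/
inductive Term (S : Sig) (X : Type) : Type where
  | var : X → Term S X
  | app : (o : S.ops) → (Fin (S.ar o) → Term S X) → Term S X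

/-- Simultaneous substitution of terms for variables. -/
def Term.subst {S : Sig} {X Y : Type} (σ : X → Term S Y) : Term S X → Term S Y
  | .var x => σ x
  | .app o ts => .app o fun i => (ts i).subst σ

/-- Renaming (substitution of variables for variables). -/
def Term.rename {S : Sig} {X Y : Type} (φ : X → Y) (t : Term S X) : Term S Y :=
  t.subst fun x => .var (φ x)

/-- Equational provability from the set `Γ` of axioms (pairs of terms over the
countable variable set `ℕ`), over arbitrary variable sets. -/
inductive Eqv {S : Sig} (Γ : Set (Term S ℕ × Term S ℕ)) :
    {X : Type} → Term S X → Term S X → Prop where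
  | axm {X : Type} {l r : Term S ℕ} (h : (l, r) ∈ Γ) (σ : ℕ → Term S X) :
      Eqv Γ (l.subst σ) (r.subst σ)
  | refl {X : Type} (t : Term S X) : Eqv Γ t t
  | symm {X : Type} {t u : Term S X} : Eqv Γ t u → Eqv Γ u t
  | trans {X : Type} {t u v : Term S X} : Eqv Γ t u → Eqv Γ u v → Eqv Γ t v
  | congr {X : Type} (o : S.ops) {ts us : Fin (S.ar o) → Term S X} :
      (∀ i, Eqv Γ (ts i) (us i)) → Eqv Γ (.app o ts) (.app o us)
  | sbst {X Y : Type} {t u : Term S X} (σ : X → Term S Y) :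
      Eqv Γ t u → Eqv Γ (t.subst σ) (u.subst σ)

def termSetoid {S : Sig} (Γ : Set (Term S ℕ × Term S ℕ)) (X : Type) : Setoid (Term S X) :=
  ⟨Eqv Γ, ⟨fun t => .refl t, fun h => h.symm, fun h h' => h.trans h'⟩⟩

/-- The free algebra over the variable set `X` in the variety axiomatized by `Γ`:
terms modulo `Γ`-provable equality.  This is the object part of the free-algebra
functor `F_Σ`. -/
def FreeAlg {S : Sig} (Γ : Set (Term S ℕ × Term S ℕ)) (X : Type) : Type :=
  Quotient (termSetoid Γ X)

/-- The action of the free-algebra functor `F_Σ` on maps: variable substitution. -/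
def FreeAlg.map {S : Sig} {Γ : Set (Term S ℕ × Term S ℕ)} {X Y : Type} (φ : X → Y) :
    FreeAlg Γ X → FreeAlg Γ Y :=
  Quotient.map (Term.rename φ) fun _ _ h => h.sbst _

end UA

namespace UA

variable {S : Sig}

/-- The Hagemann–Mitschke chain witnessing `n`-permutability. -/
def HMChain (Γ : Set (Term S ℕ × Term S ℕ)) (n : ℕ) (p : ℕ → Term S (Fin 3)) : Prop :=
  Eqv Γ (Term.var 0 : Term S ℕ) ((p 1).rename ![0, 1, 1]) ∧
  (∀ i, 0 < i → i < n - 1 →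
    Eqv Γ ((p i).rename ![0, 0, 1]) ((p (i + 1)).rename ![0, 1, 1] : Term S ℕ)) ∧
  Eqv Γ ((p (n - 1)).rename ![0, 0, 1]) (Term.var 1 : Term S ℕ)

/-- The free-algebra functor `F_Σ` weakly preserves kernel pairs. -/
def WeaklyPreservesKernelPairs (Γ : Set (Term S ℕ × Term S ℕ)) : Prop :=
  ∀ (X Y : Type) (f : X → Y) (p q : FreeAlg Γ X),
    FreeAlg.map f p = FreeAlg.map f q →
      ∃ w : FreeAlg Γ {xy : X × X // f xy.1 = f xy.2},
        FreeAlg.map (fun k => k.1.1) w = p ∧ FreeAlg.map (fun k => k.1.2) w = q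


theorem Term.subst_subst {X Y Z : Type} (σ : X → Term S Y) (τ : Y → Term S Z)
    (t : Term S X) : (t.subst σ).subst τ = t.subst fun x => (σ x).subst τ := by
  induction t with
  | var x => rfl
  | app o ts ih =>
    simp only [Term.subst]
    congr 1
    funext i
    exact ih i

theorem Term.rename_rename {X Y Z : Type} (φ : X → Y) (ψ : Y → Z) (t : Term S X) :
    (t.rename φ).rename ψ = t.rename fun x => ψ (φ x) := by
  simp only [Term.rename, Term.subst_subst]; rfl

theorem Term.subst_rename {X Y Z : Type} (φ : X → Y) (σ : Y → Term S Z) (t : Term S X) :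
    (t.rename φ).subst σ = t.subst fun x => σ (φ x) := by
  simp only [Term.rename, Term.subst_subst]; rfl

theorem Term.rename_congr {X Y : Type} {φ ψ : X → Y} (h : ∀ x, φ x = ψ x) (t : Term S X) :
    t.rename φ = t.rename ψ := by rw [funext h]

theorem Eqv.ren {Γ : Set (Term S ℕ × Term S ℕ)} {X Y : Type} (g : X → Y)
    {a b : Term S X} (h : Eqv Γ a b) : Eqv Γ (a.rename g) (b.rename g) :=
  h.sbst _

/-- The key step: weak preservation of kernel pairs turns an equation
`p(x,x,y) ≈ q(x,y,y)` into a quaternary term `s` with `p(x,y,z) ≈ s(x,y,z,z)`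
and `q(x,y,z) ≈ s(x,x,y,z)`. -/
theorem key_step (Γ : Set (Term S ℕ × Term S ℕ)) (hker : WeaklyPreservesKernelPairs Γ)
    (p q : Term S (Fin 3))
    (h : Eqv Γ ((p.rename ![0, 0, 1]) : Term S ℕ) (q.rename ![0, 1, 1])) :
    ∃ s : Term S (Fin 4),
      Eqv Γ ((s.rename ![0, 1, 2, 2]) : Term S ℕ) (p.rename ![0, 1, 2]) ∧
      Eqv Γ ((s.rename ![0, 0, 1, 2]) : Term S ℕ) (q.rename ![0, 1, 2]) := by
  classical
  have hPQ : FreeAlg.map (Γ := Γ) (![0, 0, 1, 1] : Fin 4 → Fin 2) ⟦p.rename ![0, 1, 3]⟧ =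
      FreeAlg.map ![0, 0, 1, 1] ⟦q.rename ![0, 2, 3]⟧ := by
    apply Quotient.sound
    show Eqv Γ ((p.rename ![0, 1, 3]).rename ![0, 0, 1, 1])
      ((q.rename ![0, 2, 3]).rename ![0, 0, 1, 1])
    rw [Term.rename_rename, Term.rename_rename]
    have h2 := h.ren (fun n => if n = 0 then (0 : Fin 2) else 1)
    rw [Term.rename_rename, Term.rename_rename] at h2
    have e1 : ∀ x : Fin 3, (if (![0, 0, 1] : Fin 3 → ℕ) x = 0 then (0 : Fin 2) else 1) =
        (![0, 0, 1, 1] : Fin 4 → Fin 2) ((![0, 1, 3] : Fin 3 → Fin 4) x) := by decide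
    have e2 : ∀ x : Fin 3, (if (![0, 1, 1] : Fin 3 → ℕ) x = 0 then (0 : Fin 2) else 1) =
        (![0, 0, 1, 1] : Fin 4 → Fin 2) ((![0, 2, 3] : Fin 3 → Fin 4) x) := by decide
    rw [Term.rename_congr e1, Term.rename_congr e2] at h2
    exact h2
  obtain ⟨w, hw1, hw2⟩ := hker (Fin 4) (Fin 2) ![0, 0, 1, 1] _ _ hPQ
  obtain ⟨t, rfl⟩ := w.exists_rep
  have e1 : Eqv Γ (t.rename fun k => k.1.1) (p.rename ![0, 1, 3]) := Quotient.exact hw1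
  have e2 : Eqv Γ (t.rename fun k => k.1.2) (q.rename ![0, 2, 3]) := Quotient.exact hw2
  refine ⟨t.rename (fun k => if k.1.1 ≤ 1 then k.1.1 else k.1.2), ?_, ?_⟩
  · have e1' := e1.ren (![0, 1, 2, 2] : Fin 4 → ℕ)
    rw [Term.rename_rename, Term.rename_rename] at e1'
    rw [Term.rename_rename]
    have c1 : ∀ k : {xy : Fin 4 × Fin 4 // (![0, 0, 1, 1] : Fin 4 → Fin 2) xy.1 =
        ![0, 0, 1, 1] xy.2},
        (![0, 1, 2, 2] : Fin 4 → ℕ) k.1.1 =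
        (![0, 1, 2, 2] : Fin 4 → ℕ) (if k.1.1 ≤ 1 then k.1.1 else k.1.2) := by
      intro k
      obtain ⟨⟨i, j⟩, hij⟩ := k
      exact (by decide : ∀ i j : Fin 4, (![0, 0, 1, 1] : Fin 4 → Fin 2) i = ![0, 0, 1, 1] j →
        (![0, 1, 2, 2] : Fin 4 → ℕ) i = ![0, 1, 2, 2] (if i ≤ 1 then i else j)) i j hij
    have c2 : ∀ x : Fin 3, (![0, 1, 2, 2] : Fin 4 → ℕ) ((![0, 1, 3] : Fin 3 → Fin 4) x) =
        (![0, 1, 2] : Fin 3 → ℕ) x := by decide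
    rw [Term.rename_congr c1, Term.rename_congr c2] at e1'
    exact e1'
  · have e2' := e2.ren (![0, 0, 1, 2] : Fin 4 → ℕ)
    rw [Term.rename_rename, Term.rename_rename] at e2'
    rw [Term.rename_rename]
    have c1 : ∀ k : {xy : Fin 4 × Fin 4 // (![0, 0, 1, 1] : Fin 4 → Fin 2) xy.1 =
        ![0, 0, 1, 1] xy.2},
        (![0, 0, 1, 2] : Fin 4 → ℕ) k.1.2 =
        (![0, 0, 1, 2] : Fin 4 → ℕ) (if k.1.1 ≤ 1 then k.1.1 else k.1.2) := by
      intro k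
      obtain ⟨⟨i, j⟩, hij⟩ := k
      exact (by decide : ∀ i j : Fin 4, (![0, 0, 1, 1] : Fin 4 → Fin 2) i = ![0, 0, 1, 1] j →
        (![0, 0, 1, 2] : Fin 4 → ℕ) j = ![0, 0, 1, 2] (if i ≤ 1 then i else j)) i j hij
    have c2 : ∀ x : Fin 3, (![0, 0, 1, 2] : Fin 4 → ℕ) ((![0, 2, 3] : Fin 3 → Fin 4) x) =
        (![0, 1, 2] : Fin 3 → ℕ) x := by decide
    rw [Term.rename_congr c1, Term.rename_congr c2] at e2'
    exact e2'

theorem chain_shorten (Γ : Set (Term S ℕ × Term S ℕ)) (hker : WeaklyPreservesKernelPairs Γ) :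
    ∀ k : ℕ, ∀ p : ℕ → Term S (Fin 3), HMChain Γ (k + 2) p →
    ∃ m : Term S (Fin 3),
      Eqv Γ (m.rename ![0, 1, 1]) (Term.var 0 : Term S ℕ) ∧
      Eqv Γ (m.rename ![0, 0, 1]) (Term.var 1 : Term S ℕ) := by
  intro k
  induction k with
  | zero =>
    intro p hp
    exact ⟨p 1, hp.1.symm, hp.2.2⟩
  | succ k ih =>
    intro p hp
    obtain ⟨h1, hmid, hlast⟩ := hp
    have hml : Eqv Γ (((p (k + 1)).rename ![0, 0, 1]) : Term S ℕ)
        ((p (k + 2)).rename ![0, 1, 1]) := hmid (k + 1) (Nat.succ_pos k) (by omega)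
    obtain ⟨s, hs1, hs2⟩ := key_step Γ hker (p (k + 1)) (p (k + 2)) hml
    -- derived equations for the shortened chain
    have hs1' : Eqv Γ ((s.rename ![0, 1, 1, 1]) : Term S ℕ) ((p (k + 1)).rename ![0, 1, 1]) := by
      have h' := hs1.ren (fun m => min m 1)
      rw [Term.rename_rename, Term.rename_rename] at h'
      have c1 : ∀ x : Fin 4, min ((![0, 1, 2, 2] : Fin 4 → ℕ) x) 1 =
          (![0, 1, 1, 1] : Fin 4 → ℕ) x := by decide
      have c2 : ∀ x : Fin 3, min ((![0, 1, 2] : Fin 3 → ℕ) x) 1 =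
          (![0, 1, 1] : Fin 3 → ℕ) x := by decide
      rw [Term.rename_congr c1, Term.rename_congr c2] at h'
      exact h'
    have hs2' : Eqv Γ ((s.rename ![0, 0, 0, 1]) : Term S ℕ) ((p (k + 2)).rename ![0, 0, 1]) := by
      have h' := hs2.ren (fun m => m - 1)
      rw [Term.rename_rename, Term.rename_rename] at h'
      have c1 : ∀ x : Fin 4, (![0, 0, 1, 2] : Fin 4 → ℕ) x - 1 =
          (![0, 0, 0, 1] : Fin 4 → ℕ) x := by decide
      have c2 : ∀ x : Fin 3, (![0, 1, 2] : Fin 3 → ℕ) x - 1 =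
          (![0, 0, 1] : Fin 3 → ℕ) x := by decide
      rw [Term.rename_congr c1, Term.rename_congr c2] at h'
      exact h'
    have factA : (((s.rename ![0, 1, 1, 2]).rename ![0, 1, 1]) : Term S ℕ) =
        s.rename ![0, 1, 1, 1] := by
      rw [Term.rename_rename]
      exact Term.rename_congr (by decide) s
    have factB : (((s.rename ![0, 1, 1, 2]).rename ![0, 0, 1]) : Term S ℕ) =
        s.rename ![0, 0, 0, 1] := by
      rw [Term.rename_rename]
      exact Term.rename_congr (by decide) s
    have hch : HMChain Γ (k + 2)
        (fun i => if i = k + 1 then s.rename ![0, 1, 1, 2] else p i) := by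
      refine ⟨?_, ?_, ?_⟩
      · simp only
        rcases eq_or_ne (1 : ℕ) (k + 1) with he | he
        · rw [if_pos he]
          have hk : k = 0 := by omega
          subst hk
          rw [factA]
          exact h1.trans hs1'.symm
        · rw [if_neg he]
          exact h1
      · intro i hi0 hi1
        simp only
        rw [if_neg (by omega : ¬ i = k + 1)]
        rcases eq_or_ne (i + 1) (k + 1) with he | he
        · rw [if_pos he]
          have hik : i = k := by omega
          subst hik
          rw [factA]
          exact (hmid i hi0 (by omega)).trans hs1'.symm
        · rw [if_neg he]
          exact hmid i hi0 (by omega)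
      · simp only
        rw [show k + 2 - 1 = k + 1 from rfl, if_pos rfl, factB]
        exact hs2'.trans hlast
    exact ih _ hch

/-- If `V(Σ)` is `n`-permutable and `F_Σ` weakly preserves kernel pairs, then
`V(Σ)` is a Mal'cev variety: there is a term `m` with `Σ ⊢ m(x,y,y) ≈ x` and
`Σ ⊢ m(x,x,y) ≈ y`. -/
theorem n_permutable_and_kernel_pairs_implies_malcev
    (Γ : Set (Term S ℕ × Term S ℕ)) (n : ℕ) (hn : 2 ≤ n)
    (p : ℕ → Term S (Fin 3)) (hp : HMChain Γ n p)
    (hker : WeaklyPreservesKernelPairs Γ) :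
    ∃ m : Term S (Fin 3),
      Eqv Γ (m.rename ![0, 1, 1]) (Term.var 0 : Term S ℕ) ∧
      Eqv Γ (m.rename ![0, 0, 1]) (Term.var 1 : Term S ℕ) := by
  obtain ⟨k, rfl⟩ := Nat.exists_eq_add_of_le hn
  rw [show 2 + k = k + 2 from by omega] at hp
  exact chain_shorten Γ hker k p hp

end UA
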